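/- If 0 ≤ a < 1/2 and x₀ ∈ (0,1), then the sequence of iterates f_a^{(n)}(x₀) converges to 0; if 1/2 < a ≤ 1 and x₀ ∈ (0,1), then f_a^{(n)}(x₀) converges to 1. -/

import Mathlib

/-!
Write `f_a(x) = x · ((1 - 2a) x + 2a)`. For `0 ≤ a < 1/2` the second factor increases in `x`,
so along the (decreasing) orbit of `x₀` it stays below `(1 - 2a) x₀ + 2a < 1`, and the orbit
goes to `0` geometrically. The case `1/2 < a` reduces to this one by the symmetry
`1 - f_a(x) = f_{1-a}(1 - x)`.
-/

open Filter Topology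

def fa (a x : ℝ) : ℝ := x ^ 2 + 2 * a * x * (1 - x)

theorem iterate_pos_and_le_pow_mul {g : ℝ → ℝ} {x₀ c : ℝ} (hx₀ : 0 < x₀) (hc₀ : 0 ≤ c)
    (hc : c < 1) (hg : ∀ x, 0 < x → x ≤ x₀ → 0 < g x ∧ g x ≤ c * x) (n : ℕ) :
    0 < g^[n] x₀ ∧ g^[n] x₀ ≤ c ^ n * x₀ := by
  induction n with
  | zero => simp [hx₀]
  | succ n ih =>
    obtain ⟨hpos, hle⟩ := ih
    have hle_x₀ : g^[n] x₀ ≤ x₀ :=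
      hle.trans (mul_le_of_le_one_left hx₀.le (pow_le_one₀ hc₀ hc.le))
    obtain ⟨hgpos, hgle⟩ := hg _ hpos hle_x₀
    rw [Function.iterate_succ_apply', pow_succ', mul_assoc]
    exact ⟨hgpos, hgle.trans (mul_le_mul_of_nonneg_left hle hc₀)⟩

theorem tendsto_iterate_zero_of_le_mul {g : ℝ → ℝ} {x₀ c : ℝ} (hx₀ : 0 < x₀) (hc₀ : 0 ≤ c)
    (hc : c < 1) (hg : ∀ x, 0 < x → x ≤ x₀ → 0 < g x ∧ g x ≤ c * x) :
    Tendsto (fun n ↦ g^[n] x₀) atTop (𝓝 0) := by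
  have hbound := iterate_pos_and_le_pow_mul hx₀ hc₀ hc hg
  have hgeom : Tendsto (fun n ↦ c ^ n * x₀) atTop (𝓝 0) := by
    simpa using (tendsto_pow_atTop_nhds_zero_of_lt_one hc₀ hc).mul_const x₀
  exact squeeze_zero (fun n ↦ (hbound n).1.le) (fun n ↦ (hbound n).2) hgeom

theorem fa_eq_mul (a x : ℝ) : fa a x = x * ((1 - 2 * a) * x + 2 * a) := by
  unfold fa; ring

theorem one_sub_fa (a x : ℝ) : 1 - fa a x = fa (1 - a) (1 - x) := by
  unfold fa; ring

theorem tendsto_iterate_fa_zero {a x₀ : ℝ} (ha₀ : 0 ≤ a) (ha : a < 1 / 2)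
    (hx : x₀ ∈ Set.Ioo (0 : ℝ) 1) :
    Tendsto (fun n ↦ (fa a)^[n] x₀) atTop (𝓝 0) := by
  obtain ⟨hx₀, hx₁⟩ := hx
  refine tendsto_iterate_zero_of_le_mul (c := (1 - 2 * a) * x₀ + 2 * a) hx₀
    (by nlinarith) (by nlinarith) ?_
  intro x hx hxx₀
  have hfactor_pos : 0 < (1 - 2 * a) * x + 2 * a := by nlinarith
  have hfactor_le : (1 - 2 * a) * x + 2 * a ≤ (1 - 2 * a) * x₀ + 2 * a := by nlinarith
  rw [fa_eq_mul, mul_comm ((1 - 2 * a) * x₀ + 2 * a)]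
  exact ⟨mul_pos hx hfactor_pos, mul_le_mul_of_nonneg_left hfactor_le hx.le⟩

theorem one_sub_iterate_fa (a x : ℝ) (n : ℕ) :
    1 - (fa a)^[n] x = (fa (1 - a))^[n] (1 - x) :=
  (Function.Semiconj.iterate_right (f := (1 - ·)) (one_sub_fa a) n) x

theorem fa_iterates_limit (a : ℝ) (x₀ : ℝ) (hx : x₀ ∈ Set.Ioo (0:ℝ) 1) :
    (0 ≤ a → a < 1/2 →
      Filter.Tendsto (fun n => (fun x : ℝ => x^2 + 2*a*x*(1-x))^[n] x₀)
        Filter.atTop (nhds 0)) ∧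
    (1/2 < a → a ≤ 1 →
      Filter.Tendsto (fun n => (fun x : ℝ => x^2 + 2*a*x*(1-x))^[n] x₀)
        Filter.atTop (nhds 1)) := by
  refine ⟨fun ha₀ ha ↦ tendsto_iterate_fa_zero ha₀ ha hx, fun ha ha₁ ↦ ?_⟩
  have hx' : 1 - x₀ ∈ Set.Ioo (0 : ℝ) 1 := ⟨by linarith [hx.2], by linarith [hx.1]⟩
  have hdual := tendsto_iterate_fa_zero (a := 1 - a) (by linarith) (by linarith) hx'
  have hlim : Tendsto (fun n ↦ 1 - (fa (1 - a))^[n] (1 - x₀)) atTop (𝓝 1) := by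
    simpa using (tendsto_const_nhds (x := (1 : ℝ))).sub hdual
  refine hlim.congr fun n ↦ ?_
  rw [← one_sub_iterate_fa, sub_sub_cancel]
  rfl
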